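/- For all real numbers 0 ≤ t₁ < t₂ ≤ 1 and all indices i₁, j₁, i₂, j₂ ∈ {1,…,d}: lim_{n→∞} n^{2α−1} ∫₀^{t̲₁} |K^{i₁}_{j₁}(t̲₁−s) − K^{i₁}_{j₁}(t̲₁−s̲)| · |K^{i₂}_{j₂}(t̲₂−s) − K^{i₂}_{j₂}(t̲₂−s̲)| ds = 0, where t̲₁ = ⌊nt₁⌋/n and t̲₂ = ⌊nt₂⌋/n. -/

import Mathlib

open MeasureTheory Filter

/-- Matrix Mittag--Leffler function `E_{a,b}(M) = ∑ M^k / Γ(a k + b)`. -/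
noncomputable def mittagLeffler {d : ℕ} (a b : ℝ) (M : Matrix (Fin d) (Fin d) ℝ) :
    Matrix (Fin d) (Fin d) ℝ :=
  ∑' k : ℕ, (Real.Gamma (a * k + b))⁻¹ • M ^ k

/-- `A` is negative definite: `xᵀ A x < 0` for all nonzero `x`. -/
def IsNegDef {d : ℕ} (A : Matrix (Fin d) (Fin d) ℝ) : Prop :=
  ∀ x : Fin d → ℝ, x ≠ 0 → dotProduct x (A.mulVec x) < 0

/-- `𝒦(u) = u^(α-1)` for `u > 0` (and `0` otherwise). -/
noncomputable def calK (α u : ℝ) : ℝ := if 0 < u then u ^ (α - 1) else 0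

/-- `ℰ(u) = E_{α,α}(A u^α)`. -/
noncomputable def calE {d : ℕ} (α : ℝ) (A : Matrix (Fin d) (Fin d) ℝ) (u : ℝ) :
    Matrix (Fin d) (Fin d) ℝ :=
  mittagLeffler α α ((u ^ α) • A)

/-- `E_α(A t^α)` where `E_α = E_{α,1}`. -/
noncomputable def mlOne {d : ℕ} (α : ℝ) (A : Matrix (Fin d) (Fin d) ℝ) (t : ℝ) :
    Matrix (Fin d) (Fin d) ℝ :=
  mittagLeffler α 1 ((t ^ α) • A)

/-- The kernel `K(u) = 𝒦(u) ℰ(u) = u^(α-1) E_{α,α}(A u^α)`. -/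
noncomputable def kerK {d : ℕ} (α : ℝ) (A : Matrix (Fin d) (Fin d) ℝ) (u : ℝ) :
    Matrix (Fin d) (Fin d) ℝ :=
  calK α u • calE α A u

/-- Left grid point `s̲ = ⌊n s⌋ / n` (step size `1/n`, `T = 1`). -/
noncomputable def lgrid (n : ℕ) (s : ℝ) : ℝ := (⌊(n : ℝ) * s⌋ : ℝ) / n

/-- Left grid point `s̲ = ⌊s/h⌋ h` with `h = T/n`. -/
noncomputable def grid (T : ℝ) (n : ℕ) (s : ℝ) : ℝ := (⌊s / (T / n)⌋ : ℝ) * (T / n)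

/-- Dominating function `Ψ`. -/
noncomputable def Psi (α y : ℝ) : ℝ := if y ≤ 1 then y ^ (2 * α - 2) else y ^ (2 * α - 4)

/-- `(𝒥_n)^{i₁,i₂}_{j₁,j₂}(s,y)`. -/
noncomputable def Jn {d : ℕ} (α : ℝ) (A : Matrix (Fin d) (Fin d) ℝ) (n : ℕ)
    (i1 j1 i2 j2 : Fin d) (s y : ℝ) : ℝ :=
  (calK α (y + (n : ℝ) * s - (⌊(n : ℝ) * s⌋ : ℝ)) *
        calE α A ((y + (n : ℝ) * s - (⌊(n : ℝ) * s⌋ : ℝ)) / n) i1 j1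
      - calK α ((⌈y⌉ : ℝ)) * calE α A ((⌈y⌉ : ℝ) / n) i1 j1) *
  (calK α (y + (n : ℝ) * s - (⌊(n : ℝ) * s⌋ : ℝ)) *
        calE α A ((y + (n : ℝ) * s - (⌊(n : ℝ) * s⌋ : ℝ)) / n) i2 j2
      - calK α ((⌈y⌉ : ℝ)) * calE α A ((⌈y⌉ : ℝ) / n) i2 j2)

/-- `(𝒢_n)^{i₁,i₂}_{j₁,j₂}(s,y)`. -/
noncomputable def Gn {d : ℕ} (α : ℝ) (n : ℕ) (i1 j1 i2 j2 : Fin d) (s y : ℝ) : ℝ :=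
  if i1 = j1 ∧ i2 = j2 then
    ((Real.Gamma α) ^ 2)⁻¹ *
      (calK α (y + (n : ℝ) * s - (⌊(n : ℝ) * s⌋ : ℝ)) - calK α ((⌈y⌉ : ℝ))) ^ 2
  else 0

/-- The constant `κ₂²(α)`. -/
noncomputable def kappa2sq (α : ℝ) : ℝ :=
  ((Real.Gamma α) ^ 2)⁻¹ *
    ∫ x in Set.Ioc (0 : ℝ) 1, ∫ y in Set.Ioi (0 : ℝ),
      (calK α ((⌈y⌉ : ℝ) - x) - calK α ((⌈y⌉ : ℝ))) ^ 2

/-- Frobenius norm of a matrix. -/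
noncomputable def frobNorm {d : ℕ} (M : Matrix (Fin d) (Fin d) ℝ) : ℝ :=
  Real.sqrt (∑ i, ∑ j, (M i j) ^ 2)

/-- Euclidean norm on `ℝ^d`. -/
noncomputable def euclNorm {d : ℕ} (x : Fin d → ℝ) : ℝ :=
  Real.sqrt (∑ i, (x i) ^ 2)


section Aux

lemma gamma_step {x a : ℝ} (hx : 2 ≤ x) (ha : 1 ≤ a) :
    x * Real.Gamma x ≤ Real.Gamma (x + a) := by
  have h1 : Real.Gamma (x + 1) = x * Real.Gamma x := Real.Gamma_add_one (by linarith)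
  rcases eq_or_lt_of_le (by linarith : x + 1 ≤ x + a) with h | h
  · rw [← h1, h]
  · have := (Real.Gamma_strictMonoOn_Ici (by simp only [Set.mem_Ici]; linarith)
      (by simp only [Set.mem_Ici]; linarith) h).le
    linarith [h1 ▸ this]

lemma summable_pow_div_gamma (a c B : ℝ) (ha : 1 ≤ a) (hc : 0 < c) (hB : 0 < B) :
    Summable (fun k : ℕ => ((k : ℝ) + 1) * B ^ k / Real.Gamma (a * k + c)) := by
  set f : ℕ → ℝ := fun k => ((k : ℝ) + 1) * B ^ k / Real.Gamma (a * k + c) with hf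
  have hpos : ∀ k : ℕ, 0 < f k := by
    intro k
    have hg : 0 < Real.Gamma (a * k + c) := Real.Gamma_pos_of_pos (by positivity)
    have : (0:ℝ) < ((k : ℝ) + 1) * B ^ k := by positivity
    exact div_pos this hg
  apply summable_of_ratio_test_tendsto_lt_one (l := 0) zero_lt_one
    (Eventually.of_forall fun k => (hpos k).ne')
  apply squeeze_zero' (Eventually.of_forall fun k => by positivity)
  · -- eventually ratio ≤ 2B/(a k + c)
    show ∀ᶠ k : ℕ in atTop, ‖f (k+1)‖ / ‖f k‖ ≤ 2 * B / (a * k + c)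
    filter_upwards [eventually_ge_atTop 2] with n hn
    have hn2 : (2:ℝ) ≤ (n:ℝ) := by exact_mod_cast hn
    have hx2 : (2:ℝ) ≤ a * n + c := by nlinarith
    have hxpos : (0:ℝ) < a * n + c := by linarith
    have hG : 0 < Real.Gamma (a * n + c) := Real.Gamma_pos_of_pos hxpos
    have hG' : 0 < Real.Gamma (a * n + c + a) := Real.Gamma_pos_of_pos (by linarith)
    have hstep : (a * n + c) * Real.Gamma (a * n + c) ≤ Real.Gamma (a * n + c + a) :=
      gamma_step hx2 ha
    rw [Real.norm_eq_abs, Real.norm_eq_abs, abs_of_pos (hpos _), abs_of_pos (hpos _)]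
    have harg : a * ((n:ℕ)+1 : ℕ) + c = a * n + c + a := by push_cast; ring
    have hfn1 : f (n+1) = ((n:ℝ) + 2) * B ^ (n+1) / Real.Gamma (a * n + c + a) := by
      rw [hf]; simp only []; rw [harg]; push_cast; ring_nf
    have hfn : f n = ((n:ℝ) + 1) * B ^ n / Real.Gamma (a * n + c) := rfl
    rw [hfn1]
    have hBk : (0:ℝ) < B ^ n := by positivity
    have key : ((n:ℝ)+2) * B^(n+1) ≤ 2*B*(((n:ℝ)+1)*B^n) := by
      rw [pow_succ]
      nlinarith [mul_le_mul_of_nonneg_right (show ((n:ℝ)+2) ≤ 2*((n:ℝ)+1) by linarith)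
        (le_of_lt (mul_pos hBk hB))]
    rw [div_le_div_iff₀ (hpos n) hxpos]
    calc ((n:ℝ) + 2) * B ^ (n + 1) / Real.Gamma (a * ↑n + c + a) * (a * ↑n + c)
        ≤ ((n:ℝ) + 2) * B ^ (n + 1) / ((a * ↑n + c) * Real.Gamma (a * ↑n + c)) * (a * ↑n + c) := by
          gcongr
      _ = ((n:ℝ) + 2) * B ^ (n + 1) / Real.Gamma (a * ↑n + c) := by
          field_simp
      _ ≤ 2*B*(((n:ℝ)+1)*B^n) / Real.Gamma (a * ↑n + c) := by gcongr
      _ = 2 * B * f n := by rw [hfn]; ring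
  · have h1 : Tendsto (fun k : ℕ => a * (k:ℝ) + c) atTop atTop := by
      apply tendsto_atTop_add_const_right
      exact Tendsto.const_mul_atTop (by linarith) tendsto_natCast_atTop_atTop
    have := h1.inv_tendsto_atTop
    have h2 : Tendsto (fun k : ℕ => (2*B) * (a * (k:ℝ) + c)⁻¹) atTop (nhds ((2*B) * 0)) :=
      this.const_mul _
    rw [mul_zero] at h2
    convert h2 using 2 with k
    exact div_eq_mul_inv _ _

end Aux
section Aux2

lemma summable_master {α : ℝ} (B : ℝ) (hα1 : 1/2 < α) (hα2 : α < 1) (hB : 0 < B) :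
    Summable (fun k : ℕ => ((k : ℝ) + 1) * B ^ k / Real.Gamma (α * k + α)) := by
  have hα0 : (0:ℝ) < α := by linarith
  have ha : (1:ℝ) ≤ 2 * α := by linarith
  have hB2 : (0:ℝ) < B ^ 2 := by positivity
  apply Summable.even_add_odd
  · apply Summable.of_nonneg_of_le (g := fun k : ℕ =>
      ((2*k : ℕ) + 1 : ℝ) * B ^ (2*k) / Real.Gamma (α * (2*k : ℕ) + α))
      (fun k => by
        have := Real.Gamma_pos_of_pos (show (0:ℝ) < α * (2*k : ℕ) + α by positivity)
        positivity)
      _ ((summable_pow_div_gamma (2*α) α (B^2) ha hα0 hB2).mul_left 2)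
    intro k
    have harg : α * ((2*k : ℕ) : ℝ) + α = 2*α * (k:ℝ) + α := by push_cast; ring
    have hG := Real.Gamma_pos_of_pos (show (0:ℝ) < 2*α*(k:ℝ) + α by positivity)
    rw [harg, pow_mul]
    rw [div_le_iff₀ hG]
    have h2 : (2:ℝ) * (((k:ℝ) + 1) * (B^2) ^ k / Real.Gamma (2*α*(k:ℝ)+α)) * Real.Gamma (2*α*(k:ℝ)+α)
        = 2 * (((k:ℝ) + 1) * (B^2) ^ k) := by field_simp
    rw [h2]
    have : (((2*k : ℕ) : ℝ) + 1) ≤ 2 * ((k:ℝ) + 1) := by push_cast; linarith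
    nlinarith [pow_pos hB2 k, mul_le_mul_of_nonneg_right this (le_of_lt (pow_pos hB2 k))]
  · apply Summable.of_nonneg_of_le (g := fun k : ℕ =>
      ((2*k+1 : ℕ) + 1 : ℝ) * B ^ (2*k+1) / Real.Gamma (α * (2*k+1 : ℕ) + α))
      (fun k => by
        have := Real.Gamma_pos_of_pos (show (0:ℝ) < α * (2*k+1 : ℕ) + α by positivity)
        positivity)
      _ (((summable_pow_div_gamma (2*α) (2*α) (B^2) ha (by linarith) hB2).mul_left (2*B)))
    intro k
    have harg : α * ((2*k+1 : ℕ) : ℝ) + α = 2*α * (k:ℝ) + 2*α := by push_cast; ring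
    have hG := Real.Gamma_pos_of_pos (show (0:ℝ) < 2*α*(k:ℝ) + 2*α by positivity)
    rw [harg, pow_succ, pow_mul]
    rw [div_le_iff₀ hG]
    have h2 : (2*B) * (((k:ℝ) + 1) * (B^2) ^ k / Real.Gamma (2*α*(k:ℝ)+2*α)) * Real.Gamma (2*α*(k:ℝ)+2*α)
        = 2*B * (((k:ℝ) + 1) * (B^2) ^ k) := by field_simp
    rw [h2]
    have : (((2*k+1 : ℕ) : ℝ) + 1) ≤ 2 * ((k:ℝ) + 1) := by push_cast; linarith
    nlinarith [pow_pos hB2 k, mul_le_mul_of_nonneg_right this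
      (le_of_lt (mul_pos (pow_pos hB2 k) hB))]

/-- Sum of absolute values of entries. -/
noncomputable def eSum {d : ℕ} (M : Matrix (Fin d) (Fin d) ℝ) : ℝ := ∑ i, ∑ j, |M i j|

lemma eSum_nonneg {d : ℕ} (M : Matrix (Fin d) (Fin d) ℝ) : 0 ≤ eSum M :=
  Finset.sum_nonneg fun i _ => Finset.sum_nonneg fun j _ => abs_nonneg _

lemma abs_entry_le_eSum {d : ℕ} (M : Matrix (Fin d) (Fin d) ℝ) (i j : Fin d) :
    |M i j| ≤ eSum M := by
  have h1 : |M i j| ≤ ∑ j', |M i j'| :=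
    Finset.single_le_sum (fun j' _ => abs_nonneg (M i j')) (Finset.mem_univ j)
  refine h1.trans ?_
  exact Finset.single_le_sum
    (fun i' _ => Finset.sum_nonneg fun j' _ => abs_nonneg (M i' j')) (Finset.mem_univ i)

lemma col_sum_le_eSum {d : ℕ} (M : Matrix (Fin d) (Fin d) ℝ) (j : Fin d) :
    ∑ l, |M l j| ≤ eSum M := by
  apply Finset.sum_le_sum
  intro l _
  exact Finset.single_le_sum (fun j' _ => abs_nonneg (M l j')) (Finset.mem_univ j)

lemma entry_pow_le {d : ℕ} (M : Matrix (Fin d) (Fin d) ℝ) (k : ℕ) (i j : Fin d) :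
    |(M ^ k) i j| ≤ (eSum M + 1) ^ k := by
  have hM : (0:ℝ) ≤ eSum M := eSum_nonneg M
  induction k generalizing i j with
  | zero =>
    simp only [pow_zero, Matrix.one_apply]
    split <;> simp
  | succ k ih =>
    rw [pow_succ, Matrix.mul_apply]
    calc |∑ l, (M^k) i l * M l j| ≤ ∑ l, |(M^k) i l * M l j| :=
          Finset.abs_sum_le_sum_abs _ _
      _ ≤ ∑ l : Fin d, ((eSum M + 1)^k * |M l j|) := by
          apply Finset.sum_le_sum
          intro l _
          rw [abs_mul]
          exact mul_le_mul_of_nonneg_right (ih i l) (abs_nonneg _)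
      _ = (eSum M + 1)^k * ∑ l, |M l j| := by rw [Finset.mul_sum]
      _ ≤ (eSum M + 1)^(k+1) := by
          rw [pow_succ]
          exact mul_le_mul_of_nonneg_left
            ((col_sum_le_eSum M j).trans (by linarith)) (by positivity)

end Aux2
section Aux3

variable {d : ℕ} {α : ℝ}

lemma summable_abs_bound (hα1 : 1/2 < α) (hα2 : α < 1) (A : Matrix (Fin d) (Fin d) ℝ) :
    Summable (fun k : ℕ => (Real.Gamma (α * k + α))⁻¹ * (eSum A + 1) ^ k) := by
  have hB : (0:ℝ) < eSum A + 1 := by linarith [eSum_nonneg A]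
  apply Summable.of_nonneg_of_le _ _ (summable_master (eSum A + 1) hα1 hα2 hB)
  · intro k
    have := Real.Gamma_pos_of_pos (show (0:ℝ) < α * k + α by positivity)
    positivity
  · intro k
    have hG := Real.Gamma_pos_of_pos (show (0:ℝ) < α * k + α by positivity)
    rw [div_eq_mul_inv, mul_comm (((k:ℝ)+1) * (eSum A + 1)^k) _]
    have h1 : (1:ℝ) ≤ (k:ℝ) + 1 := by linarith [Nat.cast_nonneg (α := ℝ) k]
    nlinarith [pow_pos hB k, inv_pos.mpr hG, mul_pos (pow_pos hB k) (inv_pos.mpr hG)]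

lemma summable_lin_bound (hα1 : 1/2 < α) (hα2 : α < 1) (A : Matrix (Fin d) (Fin d) ℝ) :
    Summable (fun k : ℕ => (α * (k:ℝ) + 1) * (Real.Gamma (α * k + α))⁻¹ * (eSum A + 1) ^ k) := by
  have hB : (0:ℝ) < eSum A + 1 := by linarith [eSum_nonneg A]
  apply Summable.of_nonneg_of_le _ _ (summable_master (eSum A + 1) hα1 hα2 hB)
  · intro k
    have := Real.Gamma_pos_of_pos (show (0:ℝ) < α * k + α by positivity)
    positivity
  · intro k
    have hG := Real.Gamma_pos_of_pos (show (0:ℝ) < α * k + α by positivity)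
    rw [div_eq_mul_inv, mul_comm (((k:ℝ)+1) * (eSum A + 1)^k) _]
    have h1 : α * (k:ℝ) + 1 ≤ (k:ℝ) + 1 := by nlinarith [Nat.cast_nonneg (α := ℝ) k]
    nlinarith [pow_pos hB k, inv_pos.mpr hG, mul_pos (pow_pos hB k) (inv_pos.mpr hG),
      mul_le_mul_of_nonneg_right h1 (le_of_lt (mul_pos (inv_pos.mpr hG) (pow_pos hB k)))]

lemma entry_term_bound (hα1 : 1/2 < α) (hα2 : α < 1) (A : Matrix (Fin d) (Fin d) ℝ)
    {x : ℝ} (hx : |x| ≤ 1) (i j : Fin d) (k : ℕ) :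
    |(Real.Gamma (α * k + α))⁻¹ * x ^ k * ((A ^ k) i j)|
      ≤ (Real.Gamma (α * k + α))⁻¹ * (eSum A + 1) ^ k := by
  have hG := Real.Gamma_pos_of_pos (show (0:ℝ) < α * k + α by positivity)
  have hB : (0:ℝ) ≤ eSum A := eSum_nonneg A
  rw [abs_mul, abs_mul, abs_inv, abs_of_pos hG, abs_pow]
  calc (Real.Gamma (α * k + α))⁻¹ * |x| ^ k * |(A ^ k) i j|
      ≤ (Real.Gamma (α * k + α))⁻¹ * 1 ^ k * (eSum A + 1) ^ k := by
        apply mul_le_mul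
        · exact mul_le_mul_of_nonneg_left (pow_le_pow_left₀ (abs_nonneg x) hx k)
            (le_of_lt (inv_pos.mpr hG))
        · exact entry_pow_le A k i j
        · exact abs_nonneg _
        · positivity
    _ = (Real.Gamma (α * k + α))⁻¹ * (eSum A + 1) ^ k := by rw [one_pow, mul_one]

lemma summable_entry (hα1 : 1/2 < α) (hα2 : α < 1) (A : Matrix (Fin d) (Fin d) ℝ)
    {x : ℝ} (hx : |x| ≤ 1) (i j : Fin d) :
    Summable (fun k : ℕ => (Real.Gamma (α * k + α))⁻¹ * x ^ k * ((A ^ k) i j)) := by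
  apply Summable.of_norm
  apply Summable.of_nonneg_of_le (fun k => norm_nonneg _)
    (fun k => by rw [Real.norm_eq_abs]; exact entry_term_bound hα1 hα2 A hx i j k)
    (summable_abs_bound hα1 hα2 A)

lemma ml_entry (hα1 : 1/2 < α) (hα2 : α < 1) (A : Matrix (Fin d) (Fin d) ℝ)
    {x : ℝ} (hx : |x| ≤ 1) (i j : Fin d) :
    mittagLeffler α α (x • A) i j
      = ∑' k : ℕ, (Real.Gamma (α * k + α))⁻¹ * x ^ k * ((A ^ k) i j) := by
  have hterm : ∀ (k : ℕ) (i j : Fin d),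
      ((Real.Gamma (α * k + α))⁻¹ • (x • A) ^ k) i j
        = (Real.Gamma (α * k + α))⁻¹ * x ^ k * ((A ^ k) i j) := by
    intro k i j
    rw [smul_pow]
    simp only [Matrix.smul_apply, smul_eq_mul]
    ring
  have hS : Summable (fun k : ℕ => (Real.Gamma (α * k + α))⁻¹ • (x • A) ^ k) := by
    apply Pi.summable.mpr; intro i'; apply Pi.summable.mpr; intro j'
    have := summable_entry hα1 hα2 A hx i' j'
    apply this.congr
    intro k
    exact (hterm k i' j').symm
  have hS' : Summable (fun k : ℕ =>
      ((Real.Gamma (α * k + α))⁻¹ • (x • A) ^ k : Fin d → Fin d → ℝ)) := hS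
  rw [mittagLeffler]
  exact (congrFun (tsum_apply (x := i) hS') j).trans
    ((tsum_apply (Pi.summable.mp hS' i)).trans (tsum_congr fun k => hterm k i j))

/-- The bound constant for entries of `calE`. -/
noncomputable def CB {d : ℕ} (α : ℝ) (A : Matrix (Fin d) (Fin d) ℝ) : ℝ :=
  ∑' k : ℕ, (Real.Gamma (α * k + α))⁻¹ * (eSum A + 1) ^ k

/-- The Lipschitz sum constant. -/
noncomputable def LB {d : ℕ} (α : ℝ) (A : Matrix (Fin d) (Fin d) ℝ) : ℝ :=
  ∑' k : ℕ, (α * (k:ℝ) + 1) * (Real.Gamma (α * k + α))⁻¹ * (eSum A + 1) ^ k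

lemma CB_nonneg (hα0 : 0 < α) (A : Matrix (Fin d) (Fin d) ℝ) : 0 ≤ CB α A := by
  apply tsum_nonneg
  intro k
  have hG := Real.Gamma_pos_of_pos (show (0:ℝ) < α * k + α by positivity)
  have hB := eSum_nonneg A
  exact mul_nonneg (inv_nonneg.mpr hG.le) (pow_nonneg (by linarith) k)

lemma calE_entry_bound (hα1 : 1/2 < α) (hα2 : α < 1) (A : Matrix (Fin d) (Fin d) ℝ)
    {u : ℝ} (hu0 : 0 ≤ u) (hu1 : u ≤ 1) (i j : Fin d) :
    |calE α A u i j| ≤ CB α A := by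
  have hα0 : (0:ℝ) < α := by linarith
  have hx : |u ^ α| ≤ 1 := by
    rw [abs_of_nonneg (Real.rpow_nonneg hu0 α)]
    exact Real.rpow_le_one hu0 hu1 hα0.le
  rw [calE, ml_entry hα1 hα2 A hx i j]
  have habs : Summable (fun k : ℕ =>
      |(Real.Gamma (α * k + α))⁻¹ * (u ^ α) ^ k * ((A ^ k) i j)|) := by
    apply Summable.of_nonneg_of_le (fun k => abs_nonneg _)
      (fun k => entry_term_bound hα1 hα2 A hx i j k) (summable_abs_bound hα1 hα2 A)
  calc |∑' k : ℕ, (Real.Gamma (α * k + α))⁻¹ * (u ^ α) ^ k * ((A ^ k) i j)|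
      ≤ ∑' k : ℕ, |(Real.Gamma (α * k + α))⁻¹ * (u ^ α) ^ k * ((A ^ k) i j)| := by
        have := norm_tsum_le_tsum_norm (f := fun k : ℕ =>
          (Real.Gamma (α * k + α))⁻¹ * (u ^ α) ^ k * ((A ^ k) i j)) (by
            simpa only [Real.norm_eq_abs] using habs)
        simpa only [Real.norm_eq_abs] using this
    _ ≤ CB α A := Summable.tsum_le_tsum (fun k => entry_term_bound hα1 hα2 A hx i j k) habs
        (summable_abs_bound hα1 hα2 A)

lemma kerK_entry_eq (A : Matrix (Fin d) (Fin d) ℝ) (u : ℝ) (i j : Fin d) :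
    kerK α A u i j = calK α u * calE α A u i j := by
  simp [kerK, Matrix.smul_apply, smul_eq_mul]

lemma kerK_entry_bound (hα1 : 1/2 < α) (hα2 : α < 1) (A : Matrix (Fin d) (Fin d) ℝ)
    {u : ℝ} (hu0 : 0 < u) (hu1 : u ≤ 1) (i j : Fin d) :
    |kerK α A u i j| ≤ CB α A * u ^ (α - 1) := by
  rw [kerK_entry_eq, calK, if_pos hu0, abs_mul,
    abs_of_nonneg (Real.rpow_nonneg hu0.le _), mul_comm]
  exact mul_le_mul_of_nonneg_right (calE_entry_bound hα1 hα2 A hu0.le hu1 i j)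
    (Real.rpow_nonneg hu0.le _)

end Aux3
section Aux4

variable {d : ℕ} {α : ℝ}

lemma rpow_le_inv_sq {δ x γ : ℝ} (hδ0 : 0 < δ) (hδ1 : δ ≤ 1) (hx : x ∈ Set.Icc δ 1)
    (hγ : -2 ≤ γ) : x ^ γ ≤ δ ^ (-2 : ℝ) := by
  rcases le_or_gt γ 0 with h | h
  · calc x ^ γ ≤ δ ^ γ := Real.rpow_le_rpow_of_nonpos hδ0 hx.1 h
      _ ≤ δ ^ (-2 : ℝ) := Real.rpow_le_rpow_of_exponent_ge hδ0 hδ1 hγ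
  · calc x ^ γ ≤ 1 := Real.rpow_le_one (hδ0.trans_le hx.1).le hx.2 h.le
      _ ≤ δ ^ (-2 : ℝ) :=
        Real.one_le_rpow_of_pos_of_le_one_of_nonpos hδ0 hδ1 (by norm_num)

lemma rpow_lip {δ u v β : ℝ} (hδ0 : 0 < δ) (hδ1 : δ ≤ 1) (hβ : -1 ≤ β)
    (hu : u ∈ Set.Icc δ 1) (hv : v ∈ Set.Icc δ 1) :
    |u ^ β - v ^ β| ≤ |β| * δ ^ (-2 : ℝ) * |u - v| := by
  have key := Convex.norm_image_sub_le_of_norm_hasDerivWithin_le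
    (f := fun x : ℝ => x ^ β) (f' := fun x : ℝ => β * x ^ (β - 1))
    (s := Set.Icc δ 1) (C := |β| * δ ^ (-2:ℝ))
    (fun x hx => (Real.hasDerivAt_rpow_const
      (Or.inl (ne_of_gt (hδ0.trans_le hx.1)))).hasDerivWithinAt)
    (fun x hx => by
      rw [Real.norm_eq_abs, abs_mul,
        abs_of_nonneg (Real.rpow_nonneg (hδ0.trans_le hx.1).le _)]
      exact mul_le_mul_of_nonneg_left (rpow_le_inv_sq hδ0 hδ1 hx (by linarith))
        (abs_nonneg β))
    (convex_Icc δ 1) hv hu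
  simpa [Real.norm_eq_abs] using key

lemma kerK_repr (hα1 : 1/2 < α) (hα2 : α < 1) (A : Matrix (Fin d) (Fin d) ℝ)
    {u : ℝ} (hu0 : 0 < u) (hu1 : u ≤ 1) (i j : Fin d) :
    kerK α A u i j
      = ∑' k : ℕ, ((Real.Gamma (α * k + α))⁻¹ * ((A ^ k) i j)) * u ^ (α * (k:ℝ) + α - 1) := by
  have hα0 : (0:ℝ) < α := by linarith
  have hx : |u ^ α| ≤ 1 := by
    rw [abs_of_nonneg (Real.rpow_nonneg hu0.le α)]
    exact Real.rpow_le_one hu0.le hu1 hα0.le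
  rw [kerK_entry_eq, calK, if_pos hu0, calE, ml_entry hα1 hα2 A hx i j, ← tsum_mul_left]
  apply tsum_congr
  intro k
  have h1 : (u ^ α) ^ k = u ^ (α * (k:ℝ)) := by
    rw [← Real.rpow_natCast (u ^ α) k, ← Real.rpow_mul hu0.le]
  rw [h1, show α * (k:ℝ) + α - 1 = (α - 1) + α * (k:ℝ) by ring, Real.rpow_add hu0]
  ring

lemma kerK_lip (hα1 : 1/2 < α) (hα2 : α < 1) (A : Matrix (Fin d) (Fin d) ℝ)
    {δ u v : ℝ} (hδ0 : 0 < δ) (hδ1 : δ ≤ 1) (hu : u ∈ Set.Icc δ 1) (hv : v ∈ Set.Icc δ 1)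
    (i j : Fin d) :
    |kerK α A u i j - kerK α A v i j| ≤ (δ ^ (-2:ℝ) * LB α A) * |u - v| := by
  have hα0 : (0:ℝ) < α := by linarith
  have hu0 : 0 < u := hδ0.trans_le hu.1
  have hv0 : 0 < v := hδ0.trans_le hv.1
  have hB : (0:ℝ) ≤ eSum A := eSum_nonneg A
  set c : ℕ → ℝ := fun k => (Real.Gamma (α * k + α))⁻¹ * ((A ^ k) i j) with hc
  have hcb : ∀ k : ℕ, |c k| ≤ (Real.Gamma (α * k + α))⁻¹ * (eSum A + 1) ^ k := by
    intro k
    have hG := Real.Gamma_pos_of_pos (show (0:ℝ) < α * k + α by positivity)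
    rw [hc, abs_mul, abs_inv, abs_of_pos hG]
    exact mul_le_mul_of_nonneg_left (entry_pow_le A k i j) (inv_nonneg.mpr hG.le)
  have hβlow : ∀ k : ℕ, (-1:ℝ) ≤ α * (k:ℝ) + α - 1 := by
    intro k
    have := Nat.cast_nonneg (α := ℝ) k
    nlinarith
  have hβabs : ∀ k : ℕ, |α * (k:ℝ) + α - 1| ≤ α * (k:ℝ) + 1 := by
    intro k
    have := Nat.cast_nonneg (α := ℝ) k
    rw [abs_le]
    constructor <;> nlinarith
  have hδinv : (0:ℝ) ≤ δ ^ (-2:ℝ) := Real.rpow_nonneg hδ0.le _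
  -- summability of each series
  have hsummand : ∀ {w : ℝ}, w ∈ Set.Icc δ 1 →
      Summable (fun k : ℕ => c k * w ^ (α * (k:ℝ) + α - 1)) := by
    intro w hw
    apply Summable.of_norm
    apply Summable.of_nonneg_of_le (fun k => norm_nonneg _)
      (f := fun k : ℕ => ((Real.Gamma (α * (k:ℝ) + α))⁻¹ * (eSum A + 1) ^ k) * δ ^ (-2:ℝ))
    · intro k
      rw [Real.norm_eq_abs, abs_mul]
      have h1 : |w ^ (α * (k:ℝ) + α - 1)| ≤ δ ^ (-2:ℝ) := by
        rw [abs_of_nonneg (Real.rpow_nonneg (hδ0.trans_le hw.1).le _)]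
        exact rpow_le_inv_sq hδ0 hδ1 hw (by linarith [hβlow k])
      exact mul_le_mul (hcb k) h1 (abs_nonneg _)
        (by
          have hG := Real.Gamma_pos_of_pos (show (0:ℝ) < α * k + α by positivity)
          exact mul_nonneg (inv_nonneg.mpr hG.le) (pow_nonneg (by linarith) k))
    · exact (summable_abs_bound hα1 hα2 A).mul_right _
  have hsu := hsummand hu
  have hsv := hsummand hv
  rw [kerK_repr hα1 hα2 A hu0 (hu.2) i j, kerK_repr hα1 hα2 A hv0 (hv.2) i j,
    ← Summable.tsum_sub hsu hsv]
  have hptw : ∀ k : ℕ,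
      |c k * u ^ (α * (k:ℝ) + α - 1) - c k * v ^ (α * (k:ℝ) + α - 1)|
        ≤ ((α * (k:ℝ) + 1) * (Real.Gamma (α * k + α))⁻¹ * (eSum A + 1) ^ k)
            * (δ ^ (-2:ℝ) * |u - v|) := by
    intro k
    rw [← mul_sub, abs_mul]
    have hdiff := rpow_lip hδ0 hδ1 (hβlow k) hu hv
    have hG := Real.Gamma_pos_of_pos (show (0:ℝ) < α * k + α by positivity)
    calc |c k| * |u ^ (α * (k:ℝ) + α - 1) - v ^ (α * (k:ℝ) + α - 1)|
        ≤ ((Real.Gamma (α * k + α))⁻¹ * (eSum A + 1) ^ k)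
            * ((α * (k:ℝ) + 1) * δ ^ (-2:ℝ) * |u - v|) := by
          apply mul_le_mul (hcb k) _ (abs_nonneg _)
            (mul_nonneg (inv_nonneg.mpr hG.le) (pow_nonneg (by linarith) k))
          refine hdiff.trans ?_
          have h1 : |α * (k:ℝ) + α - 1| * δ ^ (-2:ℝ) ≤ (α * (k:ℝ) + 1) * δ ^ (-2:ℝ) :=
            mul_le_mul_of_nonneg_right (hβabs k) hδinv
          exact mul_le_mul_of_nonneg_right h1 (abs_nonneg _)
      _ = ((α * (k:ℝ) + 1) * (Real.Gamma (α * k + α))⁻¹ * (eSum A + 1) ^ k)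
            * (δ ^ (-2:ℝ) * |u - v|) := by ring
  have hmaj : Summable (fun k : ℕ =>
      ((α * (k:ℝ) + 1) * (Real.Gamma (α * k + α))⁻¹ * (eSum A + 1) ^ k)
        * (δ ^ (-2:ℝ) * |u - v|)) := (summable_lin_bound hα1 hα2 A).mul_right _
  have habs : Summable (fun k : ℕ =>
      |c k * u ^ (α * (k:ℝ) + α - 1) - c k * v ^ (α * (k:ℝ) + α - 1)|) :=
    Summable.of_nonneg_of_le (fun k => abs_nonneg _) hptw hmaj
  calc |∑' k : ℕ, (c k * u ^ (α * (k:ℝ) + α - 1) - c k * v ^ (α * (k:ℝ) + α - 1))|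
      ≤ ∑' k : ℕ, |c k * u ^ (α * (k:ℝ) + α - 1) - c k * v ^ (α * (k:ℝ) + α - 1)| := by
        have := norm_tsum_le_tsum_norm (f := fun k : ℕ =>
          c k * u ^ (α * (k:ℝ) + α - 1) - c k * v ^ (α * (k:ℝ) + α - 1)) (by
            simpa only [Real.norm_eq_abs] using habs)
        simpa only [Real.norm_eq_abs] using this
    _ ≤ ∑' k : ℕ, ((α * (k:ℝ) + 1) * (Real.Gamma (α * k + α))⁻¹ * (eSum A + 1) ^ k)
          * (δ ^ (-2:ℝ) * |u - v|) := Summable.tsum_le_tsum hptw habs hmaj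
    _ = LB α A * (δ ^ (-2:ℝ) * |u - v|) := by rw [tsum_mul_right]; rfl
    _ = (δ ^ (-2:ℝ) * LB α A) * |u - v| := by ring

lemma LB_nonneg (hα0 : 0 < α) (A : Matrix (Fin d) (Fin d) ℝ) : 0 ≤ LB α A := by
  apply tsum_nonneg
  intro k
  have hG := Real.Gamma_pos_of_pos (show (0:ℝ) < α * k + α by positivity)
  have hB := eSum_nonneg A
  have hk := Nat.cast_nonneg (α := ℝ) k
  exact mul_nonneg (mul_nonneg (by nlinarith) (inv_nonneg.mpr hG.le))
    (pow_nonneg (by linarith) k)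

end Aux4
section Aux5

lemma lgrid_le {n : ℕ} (hn : 0 < n) (s : ℝ) : lgrid n s ≤ s := by
  have hn' : (0:ℝ) < n := by exact_mod_cast hn
  rw [lgrid, div_le_iff₀ hn']
  calc ((⌊(n : ℝ) * s⌋ : ℝ)) ≤ (n:ℝ) * s := Int.floor_le _
    _ = s * n := by ring

lemma lgrid_ge {n : ℕ} (hn : 0 < n) (s : ℝ) : s - 1 / n ≤ lgrid n s := by
  have hn' : (0:ℝ) < n := by exact_mod_cast hn
  rw [lgrid, le_div_iff₀ hn']
  have := (Int.sub_one_lt_floor ((n:ℝ) * s)).le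
  calc (s - 1/n) * n = (n:ℝ) * s - 1 := by field_simp
    _ ≤ (⌊(n : ℝ) * s⌋ : ℝ) := by linarith

lemma lgrid_nonneg {n : ℕ} (hn : 0 < n) {s : ℝ} (hs : 0 ≤ s) : 0 ≤ lgrid n s := by
  have hn' : (0:ℝ) < n := by exact_mod_cast hn
  apply div_nonneg _ hn'.le
  have : (0:ℤ) ≤ ⌊(n : ℝ) * s⌋ := Int.floor_nonneg.2 (by positivity)
  exact_mod_cast this

lemma lgrid_idem {n : ℕ} (hn : 0 < n) (s : ℝ) : lgrid n (lgrid n s) = lgrid n s := by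
  have hn' : (0:ℝ) < n := by exact_mod_cast hn
  rw [lgrid, lgrid, mul_div_cancel₀ _ hn'.ne', Int.floor_intCast]

lemma integrableOn_g {α : ℝ} (hα1 : 1/2 < α) (hα2 : α < 1) {T : ℝ} (hT : 0 ≤ T) :
    MeasureTheory.IntegrableOn (fun s => (T - s) ^ (α - 1)) (Set.Ioc 0 T) := by
  have h := (intervalIntegral.intervalIntegrable_rpow'
    (a := 0) (b := T) (by linarith : (-1:ℝ) < α - 1)).comp_sub_left T
  simp only [sub_zero, sub_self] at h
  exact (intervalIntegrable_iff_integrableOn_Ioc_of_le hT).1 h.symm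

lemma integral_g_le {α : ℝ} (hα1 : 1/2 < α) (hα2 : α < 1) {T : ℝ} (hT : 0 ≤ T)
    (hT1 : T ≤ 1) :
    ∫ s in Set.Ioc 0 T, (T - s) ^ (α - 1) ≤ 1 / α := by
  have hα0 : (0:ℝ) < α := by linarith
  rw [← intervalIntegral.integral_of_le hT]
  rw [show (fun s => (T - s) ^ (α - 1)) = (fun s => ((fun x : ℝ => x ^ (α-1)) (T - s))) from rfl]
  rw [intervalIntegral.integral_comp_sub_left (fun x : ℝ => x ^ (α-1)) T]
  rw [sub_zero, sub_self]
  rw [integral_rpow (Or.inl (by linarith : (-1:ℝ) < α - 1))]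
  rw [sub_add_cancel, Real.zero_rpow hα0.ne']
  have hTα : T ^ α ≤ 1 := Real.rpow_le_one hT hT1 hα0.le
  rw [sub_zero]
  gcongr

end Aux5
theorem stmt5 (α : ℝ) (hα1 : 1 / 2 < α) (hα2 : α < 1) (d : ℕ) (hd : 1 ≤ d)
    (A : Matrix (Fin d) (Fin d) ℝ) (hA : IsNegDef A)
    (t1 t2 : ℝ) (h0 : 0 ≤ t1) (h12 : t1 < t2) (h2 : t2 ≤ 1) (i1 j1 i2 j2 : Fin d) :
    Tendsto (fun n : ℕ =>
        (n : ℝ) ^ (2 * α - 1) *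
          ∫ s in Set.Ioc (0 : ℝ) (lgrid n t1),
            |kerK α A (lgrid n t1 - s) i1 j1 - kerK α A (lgrid n t1 - lgrid n s) i1 j1| *
            |kerK α A (lgrid n t2 - s) i2 j2 - kerK α A (lgrid n t2 - lgrid n s) i2 j2|)
      atTop (nhds 0) := by
  have hα0 : (0:ℝ) < α := by linarith
  have hCc0 : 0 ≤ CB α A := CB_nonneg hα0 A
  have hLl0 : 0 ≤ LB α A := LB_nonneg hα0 A
  set δ : ℝ := (t2 - t1) / 2 with hδdef
  have hδ0 : 0 < δ := by rw [hδdef]; linarith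
  have hδ1 : δ ≤ 1 := by rw [hδdef]; linarith
  set Lδ : ℝ := δ ^ (-2:ℝ) * LB α A with hLδdef
  have hLδ0 : 0 ≤ Lδ := mul_nonneg (Real.rpow_nonneg hδ0.le _) hLl0
  set c : ℝ := 2 * CB α A * Lδ / α with hcdef
  have hc0 : 0 ≤ c := by rw [hcdef]; positivity
  obtain ⟨N0, hN0⟩ := exists_nat_gt (1 / δ)
  -- the squeeze
  have hlow : ∀ n : ℕ, 0 ≤ (n : ℝ) ^ (2 * α - 1) *
      ∫ s in Set.Ioc (0 : ℝ) (lgrid n t1),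
        |kerK α A (lgrid n t1 - s) i1 j1 - kerK α A (lgrid n t1 - lgrid n s) i1 j1| *
        |kerK α A (lgrid n t2 - s) i2 j2 - kerK α A (lgrid n t2 - lgrid n s) i2 j2| := by
    intro n
    apply mul_nonneg (Real.rpow_nonneg (Nat.cast_nonneg n) _)
    exact MeasureTheory.setIntegral_nonneg measurableSet_Ioc
      (fun s _ => mul_nonneg (abs_nonneg _) (abs_nonneg _))
  have hupper : ∀ᶠ n : ℕ in atTop, (n : ℝ) ^ (2 * α - 1) *
      (∫ s in Set.Ioc (0 : ℝ) (lgrid n t1),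
        |kerK α A (lgrid n t1 - s) i1 j1 - kerK α A (lgrid n t1 - lgrid n s) i1 j1| *
        |kerK α A (lgrid n t2 - s) i2 j2 - kerK α A (lgrid n t2 - lgrid n s) i2 j2|)
      ≤ c * (n : ℝ) ^ (2 * α - 2) := by
    filter_upwards [eventually_ge_atTop (max N0 1)] with n hn
    have hn1 : 1 ≤ n := le_trans (le_max_right N0 1) hn
    have hn1' : 0 < n := hn1
    have hnpos : (0:ℝ) < n := by exact_mod_cast hn1'
    have hnN0 : (N0 : ℝ) ≤ (n : ℝ) := by
      exact_mod_cast le_trans (le_max_left N0 1) hn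
    have hinv : 1 / (n:ℝ) ≤ δ := by
      have h1 : 1 / δ < (n:ℝ) := lt_of_lt_of_le hN0 hnN0
      rw [div_le_iff₀ hnpos]
      rw [div_lt_iff₀ hδ0] at h1
      nlinarith
    set T1 : ℝ := lgrid n t1 with hT1def
    set T2 : ℝ := lgrid n t2 with hT2def
    have hT10 : 0 ≤ T1 := lgrid_nonneg hn1' h0
    have hT1le : T1 ≤ t1 := lgrid_le hn1' t1
    have hT11 : T1 ≤ 1 := by linarith
    have hT2le : T2 ≤ t2 := lgrid_le hn1' t2
    have hT21 : T2 ≤ 1 := by linarith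
    have hT2ge : t2 - 1 / n ≤ T2 := lgrid_ge hn1' t2
    have hgap : δ ≤ T2 - T1 := by rw [hδdef] at *; linarith
    -- pointwise bound
    have hpt : ∀ s ∈ Set.Ioc (0:ℝ) T1,
        |kerK α A (T1 - s) i1 j1 - kerK α A (T1 - lgrid n s) i1 j1| *
        |kerK α A (T2 - s) i2 j2 - kerK α A (T2 - lgrid n s) i2 j2|
        ≤ (2 * CB α A * (Lδ / n)) * (T1 - s) ^ (α - 1) := by
      rintro s ⟨hs0, hsT⟩
      have hsl : lgrid n s ≤ s := lgrid_le hn1' s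
      have hsl0 : 0 ≤ lgrid n s := lgrid_nonneg hn1' hs0.le
      have hsub : s - lgrid n s ≤ 1 / n := by linarith [lgrid_ge hn1' s]
      have hf2 : |kerK α A (T2 - s) i2 j2 - kerK α A (T2 - lgrid n s) i2 j2| ≤ Lδ / n := by
        have hm1 : T2 - s ∈ Set.Icc δ 1 := ⟨by linarith, by linarith⟩
        have hm2 : T2 - lgrid n s ∈ Set.Icc δ 1 := ⟨by linarith, by linarith⟩
        have hl := kerK_lip hα1 hα2 A hδ0 hδ1 hm1 hm2 i2 j2
        have habs : |(T2 - s) - (T2 - lgrid n s)| = s - lgrid n s := by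
          rw [show (T2 - s) - (T2 - lgrid n s) = -(s - lgrid n s) by ring, abs_neg,
            abs_of_nonneg (by linarith)]
        calc |kerK α A (T2 - s) i2 j2 - kerK α A (T2 - lgrid n s) i2 j2|
            ≤ Lδ * |(T2 - s) - (T2 - lgrid n s)| := hl
          _ = Lδ * (s - lgrid n s) := by rw [habs]
          _ ≤ Lδ * (1 / n) := mul_le_mul_of_nonneg_left hsub hLδ0
          _ = Lδ / n := by ring
      rcases eq_or_lt_of_le hsT with heq | hlt
      · rw [heq]
        have hls : lgrid n T1 = T1 := lgrid_idem hn1' t1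
        rw [hls, sub_self]
        rw [abs_zero, zero_mul]
        have hzz : (T1 - T1 : ℝ) ^ (α - 1) = 0 := by
          rw [sub_self, Real.zero_rpow (by linarith : α - 1 ≠ 0)]
        rw [hzz, mul_zero]
      · have h1s : 0 < T1 - s := by linarith
        have h2s : 0 < T1 - lgrid n s := by linarith
        have hb1 : |kerK α A (T1 - s) i1 j1| ≤ CB α A * (T1 - s) ^ (α - 1) :=
          kerK_entry_bound hα1 hα2 A h1s (by linarith) i1 j1
        have hb2 : |kerK α A (T1 - lgrid n s) i1 j1|
            ≤ CB α A * (T1 - lgrid n s) ^ (α - 1) :=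
          kerK_entry_bound hα1 hα2 A h2s (by linarith) i1 j1
        have hmono : (T1 - lgrid n s) ^ (α - 1) ≤ (T1 - s) ^ (α - 1) :=
          Real.rpow_le_rpow_of_nonpos h1s (by linarith) (by linarith)
        have hf1 : |kerK α A (T1 - s) i1 j1 - kerK α A (T1 - lgrid n s) i1 j1|
            ≤ 2 * CB α A * (T1 - s) ^ (α - 1) := by
          have htri : |kerK α A (T1 - s) i1 j1 - kerK α A (T1 - lgrid n s) i1 j1|
              ≤ |kerK α A (T1 - s) i1 j1| + |kerK α A (T1 - lgrid n s) i1 j1| :=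
            abs_sub _ _
          have h3 := mul_le_mul_of_nonneg_left hmono hCc0
          linarith
        calc |kerK α A (T1 - s) i1 j1 - kerK α A (T1 - lgrid n s) i1 j1| *
              |kerK α A (T2 - s) i2 j2 - kerK α A (T2 - lgrid n s) i2 j2|
            ≤ (2 * CB α A * (T1 - s) ^ (α - 1)) * (Lδ / n) := by
              apply mul_le_mul hf1 hf2 (abs_nonneg _)
              exact mul_nonneg (by linarith) (Real.rpow_nonneg h1s.le _)
          _ = (2 * CB α A * (Lδ / n)) * (T1 - s) ^ (α - 1) := by ring
    -- integral bound
    have hg : MeasureTheory.IntegrableOn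
        (fun s => (2 * CB α A * (Lδ / n)) * (T1 - s) ^ (α - 1)) (Set.Ioc 0 T1) :=
      (integrableOn_g hα1 hα2 hT10).const_mul _
    have hint : (∫ s in Set.Ioc (0:ℝ) T1,
        |kerK α A (T1 - s) i1 j1 - kerK α A (T1 - lgrid n s) i1 j1| *
        |kerK α A (T2 - s) i2 j2 - kerK α A (T2 - lgrid n s) i2 j2|)
        ≤ 2 * CB α A * (Lδ / n) * (1 / α) := by
      have h1 := MeasureTheory.integral_mono_of_nonneg
        (Filter.Eventually.of_forall fun s => mul_nonneg (abs_nonneg _) (abs_nonneg _))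
        hg
        ((MeasureTheory.ae_restrict_iff' measurableSet_Ioc).2
          (Filter.Eventually.of_forall hpt))
      refine h1.trans ?_
      rw [MeasureTheory.integral_const_mul]
      exact mul_le_mul_of_nonneg_left (integral_g_le hα1 hα2 hT10 hT11)
        (by positivity)
    calc (n : ℝ) ^ (2 * α - 1) * (∫ s in Set.Ioc (0:ℝ) T1,
          |kerK α A (T1 - s) i1 j1 - kerK α A (T1 - lgrid n s) i1 j1| *
          |kerK α A (T2 - s) i2 j2 - kerK α A (T2 - lgrid n s) i2 j2|)
        ≤ (n : ℝ) ^ (2 * α - 1) * (2 * CB α A * (Lδ / n) * (1 / α)) :=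
          mul_le_mul_of_nonneg_left hint (Real.rpow_nonneg (Nat.cast_nonneg n) _)
      _ = c * (n : ℝ) ^ (2 * α - 2) := by
          rw [show (2*α - 1) = (2*α - 2) + 1 by ring, Real.rpow_add hnpos, Real.rpow_one,
            hcdef]
          field_simp
  have htend : Tendsto (fun n : ℕ => c * (n : ℝ) ^ (2 * α - 2)) atTop (nhds 0) := by
    have h1 : Tendsto (fun x : ℝ => x ^ (2 * α - 2)) atTop (nhds 0) := by
      have h := tendsto_rpow_neg_atTop (y := 2 - 2 * α) (by linarith)
      convert h using 2 with x
      ring_nf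
    have h2 := (h1.comp tendsto_natCast_atTop_atTop).const_mul c
    rw [mul_zero] at h2
    exact h2
  exact tendsto_of_tendsto_of_tendsto_of_le_of_le' tendsto_const_nhds htend
    (Filter.Eventually.of_forall hlow) hupper
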